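/- arXiv:1806.00725 — 4 statements merged into one kernel-verified Lean document; each statement's English description precedes it below -/
import Mathlib

section
/- For positive reals a, b, p, q, the inequality a·(u'/u)·p + b·(u/u')·q ≥ 2√(a b p q) holds for all positive u, u', with equality when (u'/u)² = b q/(a p). Consequently, inf over positive functions u of Σ_β ∫ g_{β'β}(x) (u(x,β')/u(x,β)) μ(dx, β) equals Σ_β ∫ g_{ββ'}(x) √(θ(x,β')/θ(x,β)) μ(dx,β) when g_{β'β}(x) μ(x,β') / (g_{ββ'}(x) μ(x,β)) = θ(x,β')/θ(x,β). -/
open MeasureTheory Real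

lemma amgm_sqrt (X Y : ℝ) (hX : 0 ≤ X) (hY : 0 ≤ Y) :
    2 * Real.sqrt (X * Y) ≤ X + Y := by
  rw [Real.sqrt_mul hX]
  nlinarith [sq_nonneg (Real.sqrt X - Real.sqrt Y), Real.sq_sqrt hX, Real.sq_sqrt hY,
    Real.sqrt_nonneg X, Real.sqrt_nonneg Y]

lemma mul_sqrt_div (P Q : ℝ) (hP : 0 < P) (hQ : 0 ≤ Q) :
    P * Real.sqrt (Q / P) = Real.sqrt (P * Q) := by
  have h : Real.sqrt P ≠ 0 := by positivity
  rw [Real.sqrt_div hQ, Real.sqrt_mul hP.le]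
  field_simp
  linear_combination (- Real.sqrt Q) * Real.sq_sqrt hP.le

lemma div_sqrt_div (P Q : ℝ) (hP : 0 < P) (hQ : 0 < Q) :
    Q / Real.sqrt (Q / P) = Real.sqrt (P * Q) := by
  have h1 : Real.sqrt P ≠ 0 := by positivity
  have h2 : Real.sqrt Q ≠ 0 := by positivity
  rw [Real.sqrt_div hQ.le, Real.sqrt_mul hP.le, div_div_eq_mul_div]
  rw [div_eq_iff h2] at *
  linear_combination (- Real.sqrt P) * Real.sq_sqrt hQ.le

lemma t_mul_sqrt_inv (t : ℝ) (ht : 0 < t) : t * Real.sqrt t⁻¹ = Real.sqrt t := by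
  have h : Real.sqrt t * Real.sqrt t⁻¹ = 1 := by
    rw [← Real.sqrt_mul ht.le, mul_inv_cancel₀ ht.ne', Real.sqrt_one]
  calc t * Real.sqrt t⁻¹ = Real.sqrt t * (Real.sqrt t * Real.sqrt t⁻¹) := by
        rw [← mul_assoc, Real.mul_self_sqrt ht.le]
    _ = Real.sqrt t := by rw [h, mul_one]


/-- (i) the pointwise AM–GM inequality
`a·(u'/u)·p + b·(u/u')·q ≥ 2√(abpq)` for positive reals, with equality when
`(u'/u)² = bq/(ap)`; (ii) consequently, on the two-point temperature space
(encoded by `Fin 2`, with `m x j` the density of `μ(dx, βⱼ)`, `g j` the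
acceptance probability out of temperature `j`, and `θ = dμ/dϱ`), whenever
`g_{β'β}(x) μ(x,β') / (g_{ββ'}(x) μ(x,β)) = θ(x,β')/θ(x,β)`, the infimum over
positive functions `u` of `Σ_β ∫ g_{β'β}(x) (u(x,β')/u(x,β)) μ(dx, β)` equals
`Σ_β ∫ g_{ββ'}(x) √(θ(x,β')/θ(x,β)) μ(dx,β)`. -/
theorem stmt8 (d : ℕ)
    (m : EuclideanSpace ℝ (Fin d) → Fin 2 → ℝ)
    (g : Fin 2 → EuclideanSpace ℝ (Fin d) → ℝ)
    (θ : EuclideanSpace ℝ (Fin d) → Fin 2 → ℝ)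
    (hm : ∀ x j, 0 < m x j) (hg : ∀ j x, 0 < g j x) (hθ : ∀ x j, 0 < θ x j)
    (hmmeas : ∀ j, Measurable fun x => m x j) (hgmeas : ∀ j, Measurable (g j))
    (hθmeas : ∀ j, Measurable fun x => θ x j)
    (hrel : ∀ x, g 1 x * m x 1 / (g 0 x * m x 0) = θ x 1 / θ x 0)
    (hint0 : Integrable fun x => g 0 x * Real.sqrt (θ x 1 / θ x 0) * m x 0)
    (hint1 : Integrable fun x => g 1 x * Real.sqrt (θ x 0 / θ x 1) * m x 1) :
    (∀ a b p q u u' : ℝ, 0 < a → 0 < b → 0 < p → 0 < q → 0 < u → 0 < u' →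
        2 * Real.sqrt (a * b * p * q) ≤ a * (u' / u) * p + b * (u / u') * q ∧
          ((u' / u) ^ 2 = b * q / (a * p) →
            a * (u' / u) * p + b * (u / u') * q = 2 * Real.sqrt (a * b * p * q))) ∧
    sInf {r : ℝ | ∃ u : EuclideanSpace ℝ (Fin d) → Fin 2 → ℝ,
        (∀ x j, 0 < u x j) ∧
        Integrable (fun x => g 1 x * (u x 1 / u x 0) * m x 0) ∧
        Integrable (fun x => g 0 x * (u x 0 / u x 1) * m x 1) ∧
        r = (∫ x, g 1 x * (u x 1 / u x 0) * m x 0) +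
            ∫ x, g 0 x * (u x 0 / u x 1) * m x 1} =
      (∫ x, g 0 x * Real.sqrt (θ x 1 / θ x 0) * m x 0) +
        ∫ x, g 1 x * Real.sqrt (θ x 0 / θ x 1) * m x 1 := by
  
  -- Part (i)
  have part1 : ∀ a b p q u u' : ℝ, 0 < a → 0 < b → 0 < p → 0 < q → 0 < u → 0 < u' →
      2 * Real.sqrt (a * b * p * q) ≤ a * (u' / u) * p + b * (u / u') * q ∧
        ((u' / u) ^ 2 = b * q / (a * p) →
          a * (u' / u) * p + b * (u / u') * q = 2 * Real.sqrt (a * b * p * q)) := by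
    intro a b p q u u' ha hb hp hq hu hu'
    have ht : 0 < u' / u := div_pos hu' hu
    have hinv : u / u' = (u' / u)⁻¹ := by rw [inv_div]
    set t := u' / u with htdef
    constructor
    · have hXY : a * t * p * (b * t⁻¹ * q) = a * b * p * q := by
        field_simp
      have := amgm_sqrt (a * t * p) (b * t⁻¹ * q) (by positivity) (by positivity)
      rw [hXY] at this
      calc 2 * Real.sqrt (a * b * p * q) ≤ a * t * p + b * t⁻¹ * q := this
        _ = a * t * p + b * (u / u') * q := by rw [hinv]
    · intro heq
      have hbq : b * q = a * p * t ^ 2 := by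
        rw [heq]; field_simp
      have habpq : a * b * p * q = (a * p * t) ^ 2 := by
        have : a * b * p * q = (a * p) * (b * q) := by ring
        rw [this, hbq]; ring
      have hs : Real.sqrt (a * b * p * q) = a * p * t := by
        rw [habpq, Real.sqrt_sq (by positivity)]
      rw [hinv, hs]
      have : b * t⁻¹ * q = a * p * t := by
        rw [mul_comm b t⁻¹, mul_assoc, hbq]
        field_simp
      calc a * t * p + b * t⁻¹ * q = a * t * p + a * p * t := by rw [this]
        _ = 2 * (a * p * t) := by ring
  refine ⟨part1, ?_⟩
  -- Part (ii)
  set A : EuclideanSpace ℝ (Fin d) → ℝ :=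
    fun x => g 0 x * Real.sqrt (θ x 1 / θ x 0) * m x 0 with hAdef
  -- the relation, cleared of division
  have hrel' : ∀ x, g 1 x * m x 1 = g 0 x * m x 0 * (θ x 1 / θ x 0) := by
    intro x
    have h := hrel x
    rw [div_eq_div_iff (mul_pos (hg 0 x) (hm x 0)).ne' (hθ x 0).ne'] at h
    have hθ0 : (θ x 0) ≠ 0 := (hθ x 0).ne'
    field_simp
    linarith
  -- key: sqrt of the product equals A
  have hkey : ∀ x, Real.sqrt (g 1 x * m x 0 * (g 0 x * m x 1)) = A x := by
    intro x
    have h1 : g 1 x * m x 0 * (g 0 x * m x 1) = (g 0 x * m x 0) ^ 2 * (θ x 1 / θ x 0) := by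
      have : g 1 x * m x 0 * (g 0 x * m x 1) = (g 1 x * m x 1) * (g 0 x * m x 0) := by ring
      rw [this, hrel' x]; ring
    rw [h1, Real.sqrt_mul (sq_nonneg _), Real.sqrt_sq (mul_pos (hg 0 x) (hm x 0)).le, hAdef]
    ring
  -- second target integrand equals A
  have hBA : ∀ x, g 1 x * Real.sqrt (θ x 0 / θ x 1) * m x 1 = A x := by
    intro x
    have ht : 0 < θ x 1 / θ x 0 := div_pos (hθ x 1) (hθ x 0)
    have hio : θ x 0 / θ x 1 = (θ x 1 / θ x 0)⁻¹ := by rw [inv_div]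
    calc g 1 x * Real.sqrt (θ x 0 / θ x 1) * m x 1
        = (g 1 x * m x 1) * Real.sqrt ((θ x 1 / θ x 0)⁻¹) := by rw [hio]; ring
      _ = g 0 x * m x 0 * ((θ x 1 / θ x 0) * Real.sqrt ((θ x 1 / θ x 0)⁻¹)) := by
          rw [hrel' x]; ring
      _ = g 0 x * m x 0 * Real.sqrt (θ x 1 / θ x 0) := by rw [t_mul_sqrt_inv _ ht]
      _ = A x := by rw [hAdef]; ring
  have hInt2 : (∫ x, g 1 x * Real.sqrt (θ x 0 / θ x 1) * m x 1) = ∫ x, A x := by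
    exact integral_congr_ae (Filter.Eventually.of_forall hBA)
  have hAint : Integrable A := hint0
  -- the witness function
  set u₀ : EuclideanSpace ℝ (Fin d) → Fin 2 → ℝ :=
    fun x => ![(1 : ℝ), Real.sqrt (g 0 x * m x 1 / (g 1 x * m x 0))] with hu₀
  have hu₀0 : ∀ x, u₀ x 0 = 1 := fun x => rfl
  have hu₀1 : ∀ x, u₀ x 1 = Real.sqrt (g 0 x * m x 1 / (g 1 x * m x 0)) := fun x => rfl
  have hu₀pos : ∀ x j, 0 < u₀ x j := by
    intro x j
    fin_cases j
    · exact one_pos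
    · exact Real.sqrt_pos.mpr
        (div_pos (mul_pos (hg 0 x) (hm x 1)) (mul_pos (hg 1 x) (hm x 0)))
  have hw1 : ∀ x, g 1 x * (u₀ x 1 / u₀ x 0) * m x 0 = A x := by
    intro x
    rw [hu₀0, hu₀1, div_one]
    have hP : 0 < g 1 x * m x 0 := mul_pos (hg 1 x) (hm x 0)
    have hQ : 0 ≤ g 0 x * m x 1 := (mul_pos (hg 0 x) (hm x 1)).le
    calc g 1 x * Real.sqrt (g 0 x * m x 1 / (g 1 x * m x 0)) * m x 0
        = (g 1 x * m x 0) * Real.sqrt (g 0 x * m x 1 / (g 1 x * m x 0)) := by ring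
      _ = Real.sqrt (g 1 x * m x 0 * (g 0 x * m x 1)) := mul_sqrt_div _ _ hP hQ
      _ = A x := hkey x
  have hw2 : ∀ x, g 0 x * (u₀ x 0 / u₀ x 1) * m x 1 = A x := by
    intro x
    rw [hu₀0, hu₀1]
    have hP : 0 < g 1 x * m x 0 := mul_pos (hg 1 x) (hm x 0)
    have hQ : 0 < g 0 x * m x 1 := mul_pos (hg 0 x) (hm x 1)
    calc g 0 x * (1 / Real.sqrt (g 0 x * m x 1 / (g 1 x * m x 0))) * m x 1
        = (g 0 x * m x 1) / Real.sqrt (g 0 x * m x 1 / (g 1 x * m x 0)) := by ring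
      _ = Real.sqrt (g 1 x * m x 0 * (g 0 x * m x 1)) := div_sqrt_div _ _ hP hQ
      _ = A x := hkey x
  -- membership of the target value
  have hmem : (∫ x, A x) + ∫ x, A x ∈ {r : ℝ | ∃ u : EuclideanSpace ℝ (Fin d) → Fin 2 → ℝ,
      (∀ x j, 0 < u x j) ∧
      Integrable (fun x => g 1 x * (u x 1 / u x 0) * m x 0) ∧
      Integrable (fun x => g 0 x * (u x 0 / u x 1) * m x 1) ∧
      r = (∫ x, g 1 x * (u x 1 / u x 0) * m x 0) +
          ∫ x, g 0 x * (u x 0 / u x 1) * m x 1} := by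
    refine ⟨u₀, hu₀pos, ?_, ?_, ?_⟩
    · have : (fun x => g 1 x * (u₀ x 1 / u₀ x 0) * m x 0) = A := funext hw1
      rw [this]; exact hAint
    · have : (fun x => g 0 x * (u₀ x 0 / u₀ x 1) * m x 1) = A := funext hw2
      rw [this]; exact hAint
    · have e1 : (fun x => g 1 x * (u₀ x 1 / u₀ x 0) * m x 0) = A := funext hw1
      have e2 : (fun x => g 0 x * (u₀ x 0 / u₀ x 1) * m x 1) = A := funext hw2
      rw [e1, e2]
  -- lower bound
  have hlb : ∀ r ∈ {r : ℝ | ∃ u : EuclideanSpace ℝ (Fin d) → Fin 2 → ℝ,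
      (∀ x j, 0 < u x j) ∧
      Integrable (fun x => g 1 x * (u x 1 / u x 0) * m x 0) ∧
      Integrable (fun x => g 0 x * (u x 0 / u x 1) * m x 1) ∧
      r = (∫ x, g 1 x * (u x 1 / u x 0) * m x 0) +
          ∫ x, g 0 x * (u x 0 / u x 1) * m x 1},
      (∫ x, A x) + ∫ x, A x ≤ r := by
    rintro r ⟨u, hupos, hi1, hi2, hr⟩
    have hpt : ∀ x, 2 * A x ≤ g 1 x * (u x 1 / u x 0) * m x 0
        + g 0 x * (u x 0 / u x 1) * m x 1 := by
      intro x
      have h := (part1 (g 1 x) (g 0 x) (m x 0) (m x 1) (u x 0) (u x 1)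
        (hg 1 x) (hg 0 x) (hm x 0) (hm x 1) (hupos x 0) (hupos x 1)).1
      have harg : g 1 x * g 0 x * m x 0 * m x 1 = g 1 x * m x 0 * (g 0 x * m x 1) := by
        ring
      rw [harg, hkey x] at h
      exact h
    have hineq : ∫ x, 2 * A x ≤ ∫ x, (g 1 x * (u x 1 / u x 0) * m x 0
        + g 0 x * (u x 0 / u x 1) * m x 1) :=
      integral_mono (hAint.const_mul 2) (hi1.add hi2) hpt
    rw [integral_add hi1 hi2] at hineq
    rw [hr]
    calc (∫ x, A x) + ∫ x, A x = ∫ x, 2 * A x := by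
          rw [integral_const_mul]; ring
      _ ≤ _ := hineq
  rw [hInt2]
  exact le_antisymm (csInf_le ⟨_, fun r hr => hlb r hr⟩ hmem) (le_csInf ⟨_, hmem⟩ hlb)
end

section
/- The variational expression −inf_{u>0} Σ_β ∫ [−g_{ββ'}(x) + g_{β'β}(x) u(x,β')/u(x,β)] μ(dx,β) equals ½ Σ_β ∫ g_{ββ'}(x) [1 − √(θ(x,β')/θ(x,β))]² μ(dx,β), given the relations μ(x,β')/μ(x,β) = (θ(x,β')/θ(x,β))·(ρ_{β'}(x)/ρ_β(x)) and g_{ββ'}/g_{β'β} = ρ_{β'}/ρ_β. -/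
open MeasureTheory Real

lemma aux_mul_sqrt_div {A B : ℝ} (hA : 0 < A) (hB : 0 < B) :
    A * Real.sqrt (B / A) = Real.sqrt (A * B) := by
  have h : Real.sqrt A ≠ 0 := (Real.sqrt_pos.mpr hA).ne'
  have h2 : Real.sqrt A * Real.sqrt A = A := Real.mul_self_sqrt hA.le
  rw [Real.sqrt_div hB.le, Real.sqrt_mul hA.le]
  field_simp
  linear_combination (-1 : ℝ) * h2

lemma aux_amgm {sa sb t : ℝ} (ht : 0 < t) : 2*(sa*sb) ≤ sa^2*t + sb^2/t := by
  have h1 : sa^2*t + sb^2/t - 2*(sa*sb) = (sa*t-sb)^2/t := by field_simp; ring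
  have h2 : 0 ≤ (sa*t-sb)^2/t := div_nonneg (sq_nonneg _) ht.le
  linarith

lemma aux_ptid {a b : ℝ} (ha : 0 < a) (hb : 0 < b) :
    a*(1 - Real.sqrt (b/a))^2 + b*(1 - Real.sqrt (a/b))^2
      = 2*a + 2*b - 4*Real.sqrt (a*b) := by
  have h1 : Real.sqrt a ^ 2 = a := Real.sq_sqrt ha.le
  have h2 : Real.sqrt b ^ 2 = b := Real.sq_sqrt hb.le
  have hsa : Real.sqrt a ≠ 0 := (Real.sqrt_pos.mpr ha).ne'
  have hsb : Real.sqrt b ≠ 0 := (Real.sqrt_pos.mpr hb).ne'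
  rw [Real.sqrt_div hb.le, Real.sqrt_div ha.le, Real.sqrt_mul ha.le]
  field_simp
  linear_combination (Real.sqrt b ^ 2 * Real.sqrt a ^ 2 + 2 * Real.sqrt b ^ 3 * Real.sqrt a - Real.sqrt b ^ 4) * h1 +
    (-Real.sqrt a ^ 4 + 2 * Real.sqrt b * Real.sqrt a ^ 3 + Real.sqrt b ^ 2 * Real.sqrt a ^ 2) * h2

/-- the variational expression
`−inf_{u>0} Σ_β ∫ [−g_{ββ'}(x) + g_{β'β}(x) u(x,β')/u(x,β)] μ(dx,β)` equals
`½ Σ_β ∫ g_{ββ'}(x) [1 − √(θ(x,β')/θ(x,β))]² μ(dx,β)`, given the relations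
`μ(x,β')/μ(x,β) = (θ(x,β')/θ(x,β))·(ρ_{β'}(x)/ρ_β(x))` and
`g_{ββ'}/g_{β'β} = ρ_{β'}/ρ_β`.  Two temperatures are encoded by `Fin 2`,
`m x j` is the density of `μ(dx, βⱼ)`, `g j` the acceptance probability out of
temperature `j`, `ρ j` the Boltzmann density at temperature `j`, `θ = dμ/dϱ`. -/
theorem stmt9 (d : ℕ)
    (m : EuclideanSpace ℝ (Fin d) → Fin 2 → ℝ)
    (g : Fin 2 → EuclideanSpace ℝ (Fin d) → ℝ)
    (θ : EuclideanSpace ℝ (Fin d) → Fin 2 → ℝ)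
    (ρ : Fin 2 → EuclideanSpace ℝ (Fin d) → ℝ)
    (hm : ∀ x j, 0 < m x j) (hg : ∀ j x, 0 < g j x) (hθ : ∀ x j, 0 < θ x j)
    (hρ : ∀ j x, 0 < ρ j x)
    (hmmeas : ∀ j, Measurable fun x => m x j) (hgmeas : ∀ j, Measurable (g j))
    (hθmeas : ∀ j, Measurable fun x => θ x j)
    (hrel₁ : ∀ x, m x 1 / m x 0 = θ x 1 / θ x 0 * (ρ 1 x / ρ 0 x))
    (hrel₂ : ∀ x, g 0 x / g 1 x = ρ 1 x / ρ 0 x)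
    (hgm0 : Integrable fun x => g 0 x * m x 0)
    (hgm1 : Integrable fun x => g 1 x * m x 1)
    (hint0 : Integrable fun x => g 0 x * (1 - Real.sqrt (θ x 1 / θ x 0)) ^ 2 * m x 0)
    (hint1 : Integrable fun x => g 1 x * (1 - Real.sqrt (θ x 0 / θ x 1)) ^ 2 * m x 1) :
    -sInf {r : ℝ | ∃ u : EuclideanSpace ℝ (Fin d) → Fin 2 → ℝ,
        (∀ x j, 0 < u x j) ∧
        Integrable (fun x => (-g 0 x + g 1 x * (u x 1 / u x 0)) * m x 0) ∧
        Integrable (fun x => (-g 1 x + g 0 x * (u x 0 / u x 1)) * m x 1) ∧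
        r = (∫ x, (-g 0 x + g 1 x * (u x 1 / u x 0)) * m x 0) +
            ∫ x, (-g 1 x + g 0 x * (u x 0 / u x 1)) * m x 1} =
      (1 / 2) *
        ((∫ x, g 0 x * (1 - Real.sqrt (θ x 1 / θ x 0)) ^ 2 * m x 0) +
          ∫ x, g 1 x * (1 - Real.sqrt (θ x 0 / θ x 1)) ^ 2 * m x 1) := by
  have ha : ∀ x, 0 < g 0 x * m x 0 := fun x => mul_pos (hg 0 x) (hm x 0)
  have hb : ∀ x, 0 < g 1 x * m x 1 := fun x => mul_pos (hg 1 x) (hm x 1)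
  have hA' : ∀ x, 0 < g 1 x * m x 0 := fun x => mul_pos (hg 1 x) (hm x 0)
  have hB' : ∀ x, 0 < g 0 x * m x 1 := fun x => mul_pos (hg 0 x) (hm x 1)
  -- the geometric-mean function
  set s : EuclideanSpace ℝ (Fin d) → ℝ :=
    fun x => Real.sqrt (g 0 x * m x 0 * (g 1 x * m x 1)) with hs_def
  have hs_meas : Measurable s :=
    Real.continuous_sqrt.measurable.comp (((hgmeas 0).mul (hmmeas 0)).mul ((hgmeas 1).mul (hmmeas 1)))
  have hs_int : Integrable s := by
    refine Integrable.mono' (hgm0.add hgm1) hs_meas.aestronglyMeasurable (ae_of_all _ fun x => ?_)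
    rw [Real.norm_eq_abs, abs_of_nonneg (Real.sqrt_nonneg _), Pi.add_apply]
    have h1 : Real.sqrt (g 0 x * m x 0 * (g 1 x * m x 1)) =
        Real.sqrt (g 0 x * m x 0) * Real.sqrt (g 1 x * m x 1) := Real.sqrt_mul (ha x).le _
    rw [h1]
    nlinarith [Real.sq_sqrt (ha x).le, Real.sq_sqrt (hb x).le,
      sq_nonneg (Real.sqrt (g 0 x * m x 0) - Real.sqrt (g 1 x * m x 1))]
  -- key ratio identities
  have hkey : ∀ x, θ x 1 / θ x 0 = (g 1 x * m x 1) / (g 0 x * m x 0) := by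
    intro x
    have e2 : g 0 x * ρ 0 x = ρ 1 x * g 1 x :=
      (div_eq_div_iff (hg 1 x).ne' (hρ 0 x).ne').mp (hrel₂ x)
    have e1 : m x 1 * (θ x 0 * ρ 0 x) = θ x 1 * ρ 1 x * m x 0 := by
      have h := hrel₁ x
      rw [div_mul_div_comm] at h
      exact (div_eq_div_iff (hm x 0).ne' (mul_pos (hθ x 0) (hρ 0 x)).ne').mp h
    rw [div_eq_div_iff (hθ x 0).ne' (ha x).ne']
    have hρ0 : ρ 0 x ≠ 0 := (hρ 0 x).ne'
    have hc : ρ 0 x * (θ x 1 * (g 0 x * m x 0)) = ρ 0 x * (g 1 x * m x 1 * θ x 0) := by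
      linear_combination (θ x 1 * m x 0) * e2 - g 1 x * e1
    exact mul_left_cancel₀ hρ0 hc
  have hkey' : ∀ x, θ x 0 / θ x 1 = (g 0 x * m x 0) / (g 1 x * m x 1) := by
    intro x
    have h := hkey x
    rw [div_eq_div_iff (hθ x 0).ne' (ha x).ne'] at h
    rw [div_eq_div_iff (hθ x 1).ne' (hb x).ne']
    linarith
  -- pointwise identity for the RHS
  have hpt : ∀ x, g 0 x * (1 - Real.sqrt (θ x 1 / θ x 0)) ^ 2 * m x 0 +
      g 1 x * (1 - Real.sqrt (θ x 0 / θ x 1)) ^ 2 * m x 1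
      = 2*(g 0 x * m x 0) + 2*(g 1 x * m x 1) - 4 * s x := by
    intro x
    rw [hkey x, hkey' x, hs_def]
    have h := aux_ptid (ha x) (hb x)
    linear_combination h
  -- the minimizer
  set t : EuclideanSpace ℝ (Fin d) → ℝ :=
    fun x => Real.sqrt (g 0 x * m x 1 / (g 1 x * m x 0)) with ht_def
  have ht_pos : ∀ x, 0 < t x := fun x => Real.sqrt_pos.mpr (div_pos (hB' x) (hA' x))
  have hAt : ∀ x, g 1 x * m x 0 * t x = s x := by
    intro x
    rw [ht_def, aux_mul_sqrt_div (hA' x) (hB' x), hs_def]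
    congr 1; ring
  have hBt : ∀ x, g 0 x * m x 1 / t x = s x := by
    intro x
    rw [ht_def, div_eq_mul_inv, ← Real.sqrt_inv, inv_div,
      aux_mul_sqrt_div (hB' x) (hA' x), hs_def]
    congr 1; ring
  -- integrable candidate integrands
  have hf0_int : Integrable (fun x => -(g 0 x * m x 0) + s x) := hgm0.neg.add hs_int
  have hf1_int : Integrable (fun x => -(g 1 x * m x 1) + s x) := hgm1.neg.add hs_int
  set L : ℝ := (∫ x, (-(g 0 x * m x 0) + s x)) + ∫ x, (-(g 1 x * m x 1) + s x) with hL_def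
  -- equalities of the candidate's integrands
  have he0 : (fun x => (-g 0 x + g 1 x *
      ((fun (x : EuclideanSpace ℝ (Fin d)) (j : Fin 2) => if j = 0 then (1:ℝ) else t x) x 1 /
       (fun (x : EuclideanSpace ℝ (Fin d)) (j : Fin 2) => if j = 0 then (1:ℝ) else t x) x 0)) * m x 0)
      = fun x => -(g 0 x * m x 0) + s x := by
    funext x
    simp only [Fin.isValue, one_ne_zero, ite_false, ite_true, reduceIte, div_one,
      show (1 : Fin 2) ≠ 0 by decide]
    have h := hAt x
    linear_combination h
  have he1 : (fun x => (-g 1 x + g 0 x *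
      ((fun (x : EuclideanSpace ℝ (Fin d)) (j : Fin 2) => if j = 0 then (1:ℝ) else t x) x 0 /
       (fun (x : EuclideanSpace ℝ (Fin d)) (j : Fin 2) => if j = 0 then (1:ℝ) else t x) x 1)) * m x 1)
      = fun x => -(g 1 x * m x 1) + s x := by
    funext x
    simp only [Fin.isValue, one_ne_zero, ite_false, ite_true, reduceIte,
      show (1 : Fin 2) ≠ 0 by decide]
    have h := hBt x
    have htne : t x ≠ 0 := (ht_pos x).ne'
    field_simp
    field_simp at h
    linear_combination h
  have hleast : IsLeast {r : ℝ | ∃ u : EuclideanSpace ℝ (Fin d) → Fin 2 → ℝ,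
        (∀ x j, 0 < u x j) ∧
        Integrable (fun x => (-g 0 x + g 1 x * (u x 1 / u x 0)) * m x 0) ∧
        Integrable (fun x => (-g 1 x + g 0 x * (u x 0 / u x 1)) * m x 1) ∧
        r = (∫ x, (-g 0 x + g 1 x * (u x 1 / u x 0)) * m x 0) +
            ∫ x, (-g 1 x + g 0 x * (u x 0 / u x 1)) * m x 1} L := by
    constructor
    · refine ⟨fun x j => if j = 0 then (1:ℝ) else t x, ?_, ?_, ?_, ?_⟩
      · intro x j
        by_cases hj : j = 0 <;> simp [hj, ht_pos x]
      · rw [he0]; exact hf0_int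
      · rw [he1]; exact hf1_int
      · rw [he0, he1]
    · rintro r ⟨u, hu, hi0, hi1, rfl⟩
      rw [hL_def, ← integral_add hf0_int hf1_int, ← integral_add hi0 hi1]
      refine integral_mono (hf0_int.add hf1_int) (hi0.add hi1) fun x => ?_
      have htq : 0 < u x 1 / u x 0 := div_pos (hu x 1) (hu x 0)
      have am := aux_amgm (sa := Real.sqrt (g 1 x * m x 0)) (sb := Real.sqrt (g 0 x * m x 1)) htq
      rw [Real.sq_sqrt (hA' x).le, Real.sq_sqrt (hB' x).le] at am
      have hss : Real.sqrt (g 1 x * m x 0) * Real.sqrt (g 0 x * m x 1) = s x := by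
        rw [← Real.sqrt_mul (hA' x).le, hs_def]; congr 1; ring
      rw [hss] at am
      have hdiv : g 0 x * m x 1 / (u x 1 / u x 0) = g 0 x * m x 1 * (u x 0 / u x 1) := by
        rw [div_div_eq_mul_div, mul_div_assoc]
      rw [hdiv] at am
      have expand : (-g 0 x + g 1 x * (u x 1 / u x 0)) * m x 0 +
          (-g 1 x + g 0 x * (u x 0 / u x 1)) * m x 1
          = -(g 0 x * m x 0) - g 1 x * m x 1 +
            (g 1 x * m x 0 * (u x 1 / u x 0) + g 0 x * m x 1 * (u x 0 / u x 1)) := by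
        ring
      show -(g 0 x * m x 0) + s x + (-(g 1 x * m x 1) + s x) ≤ _
      rw [expand]
      linarith
  rw [hleast.csInf_eq]
  -- compute L
  have hn0 : Integrable (fun x => -(g 0 x * m x 0)) volume := hgm0.neg
  have hn1 : Integrable (fun x => -(g 1 x * m x 1)) volume := hgm1.neg
  have hLval : L = -(∫ x, g 0 x * m x 0) - (∫ x, g 1 x * m x 1) + 2 * ∫ x, s x := by
    rw [hL_def, integral_add hn0 hs_int, integral_add hn1 hs_int,
      integral_neg, integral_neg]
    ring
  -- compute the RHS sum
  have hR : (∫ x, g 0 x * (1 - Real.sqrt (θ x 1 / θ x 0)) ^ 2 * m x 0) +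
      ∫ x, g 1 x * (1 - Real.sqrt (θ x 0 / θ x 1)) ^ 2 * m x 1
      = 2 * (∫ x, g 0 x * m x 0) + 2 * (∫ x, g 1 x * m x 1) - 4 * ∫ x, s x := by
    rw [← integral_add hint0 hint1]
    have hfe : (fun x => g 0 x * (1 - Real.sqrt (θ x 1 / θ x 0)) ^ 2 * m x 0 +
        g 1 x * (1 - Real.sqrt (θ x 0 / θ x 1)) ^ 2 * m x 1)
        = fun x => 2*(g 0 x * m x 0) + 2*(g 1 x * m x 1) - 4 * s x := funext hpt
    have hi2 : Integrable (fun x => 2*(g 0 x * m x 0) + 2*(g 1 x * m x 1)) volume :=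
      (hgm0.const_mul 2).add (hgm1.const_mul 2)
    rw [hfe, integral_sub hi2 (hs_int.const_mul 4),
      integral_add (hgm0.const_mul 2) (hgm1.const_mul 2),
      integral_const_mul, integral_const_mul, integral_const_mul]
  rw [hR, hLval]
  ring
end

section
/- The rate functional J₁ vanishes at μ if and only if θ(x,β₁) = θ(x,β₂) for μ-almost every x, assuming g_{ββ'}(x) > 0 everywhere. In particular J₁(ϱ) = 0 where ϱ is the equilibrium measure (for which θ ≡ 1). -/
open MeasureTheory Real

lemma aux_ptwise {g a b : ℝ} (hg : 0 < g) (ha : 0 < a) (hb : 0 < b) :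
    g * (1 - Real.sqrt (b / a)) ^ 2 = 0 ↔ a = b := by
  constructor
  · intro h
    have h2 : (1 - Real.sqrt (b / a)) ^ 2 = 0 := by
      rcases mul_eq_zero.1 h with h' | h'
      · exact absurd h' hg.ne'
      · exact h'
    have h3 : Real.sqrt (b / a) = 1 := by nlinarith [sq_nonneg (1 - Real.sqrt (b / a))]
    have h4 : b / a = 1 := by
      have := Real.sq_sqrt (le_of_lt (div_pos hb ha))
      rw [h3] at this; linarith
    field_simp at h4; linarith
  · intro h
    subst h
    rw [div_self ha.ne', Real.sqrt_one]
    ring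

/-- the jump rate functional
`J₁(μ) = ½ Σ_β ∫ g_{ββ'}(x) [1 − √(θ(x,β')/θ(x,β))]² μ(dx, β)`
vanishes if and only if `θ(x,β₁) = θ(x,β₂)` for `μ`-almost every `x`
(assuming `g_{ββ'} > 0` everywhere); in particular, if `θ ≡ 1` (the case
`μ = ϱ`), then `J₁ = 0`. Two temperatures are encoded by `Fin 2` and `μ j`
is the component of `μ` on temperature `j`. -/
theorem stmt10 (d : ℕ) (μ : Fin 2 → Measure (EuclideanSpace ℝ (Fin d)))
    (g : Fin 2 → EuclideanSpace ℝ (Fin d) → ℝ)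
    (θ : EuclideanSpace ℝ (Fin d) → Fin 2 → ℝ)
    (hg : ∀ j x, 0 < g j x) (hθ : ∀ x j, 0 < θ x j)
    (hint0 : Integrable (fun x => g 0 x * (1 - Real.sqrt (θ x 1 / θ x 0)) ^ 2) (μ 0))
    (hint1 : Integrable (fun x => g 1 x * (1 - Real.sqrt (θ x 0 / θ x 1)) ^ 2) (μ 1)) :
    ((1 / 2) *
        ((∫ x, g 0 x * (1 - Real.sqrt (θ x 1 / θ x 0)) ^ 2 ∂μ 0) +
          ∫ x, g 1 x * (1 - Real.sqrt (θ x 0 / θ x 1)) ^ 2 ∂μ 1) = 0 ↔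
      (∀ᵐ x ∂μ 0, θ x 0 = θ x 1) ∧ ∀ᵐ x ∂μ 1, θ x 0 = θ x 1) ∧
    ((∀ x j, θ x j = 1) →
      (1 / 2) *
        ((∫ x, g 0 x * (1 - Real.sqrt (θ x 1 / θ x 0)) ^ 2 ∂μ 0) +
          ∫ x, g 1 x * (1 - Real.sqrt (θ x 0 / θ x 1)) ^ 2 ∂μ 1) = 0) := by
  have hnn0 : 0 ≤ᵐ[μ 0] fun x => g 0 x * (1 - Real.sqrt (θ x 1 / θ x 0)) ^ 2 :=
    Filter.Eventually.of_forall fun x => mul_nonneg (hg 0 x).le (sq_nonneg _)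
  have hnn1 : 0 ≤ᵐ[μ 1] fun x => g 1 x * (1 - Real.sqrt (θ x 0 / θ x 1)) ^ 2 :=
    Filter.Eventually.of_forall fun x => mul_nonneg (hg 1 x).le (sq_nonneg _)
  have hI0 : 0 ≤ ∫ x, g 0 x * (1 - Real.sqrt (θ x 1 / θ x 0)) ^ 2 ∂μ 0 :=
    integral_nonneg fun x => mul_nonneg (hg 0 x).le (sq_nonneg _)
  have hI1 : 0 ≤ ∫ x, g 1 x * (1 - Real.sqrt (θ x 0 / θ x 1)) ^ 2 ∂μ 1 :=
    integral_nonneg fun x => mul_nonneg (hg 1 x).le (sq_nonneg _)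
  have key0 : (∫ x, g 0 x * (1 - Real.sqrt (θ x 1 / θ x 0)) ^ 2 ∂μ 0) = 0 ↔
      ∀ᵐ x ∂μ 0, θ x 0 = θ x 1 := by
    rw [integral_eq_zero_iff_of_nonneg_ae hnn0 hint0]
    constructor <;> intro h <;> filter_upwards [h] with x hx
    · exact (aux_ptwise (hg 0 x) (hθ x 0) (hθ x 1)).1 hx
    · exact (aux_ptwise (hg 0 x) (hθ x 0) (hθ x 1)).2 hx
  have key1 : (∫ x, g 1 x * (1 - Real.sqrt (θ x 0 / θ x 1)) ^ 2 ∂μ 1) = 0 ↔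
      ∀ᵐ x ∂μ 1, θ x 0 = θ x 1 := by
    rw [integral_eq_zero_iff_of_nonneg_ae hnn1 hint1]
    constructor <;> intro h <;> filter_upwards [h] with x hx
    · exact ((aux_ptwise (hg 1 x) (hθ x 1) (hθ x 0)).1 hx).symm
    · exact (aux_ptwise (hg 1 x) (hθ x 1) (hθ x 0)).2 hx.symm
  constructor
  · constructor
    · intro h
      have hsum : (∫ x, g 0 x * (1 - Real.sqrt (θ x 1 / θ x 0)) ^ 2 ∂μ 0) +
          (∫ x, g 1 x * (1 - Real.sqrt (θ x 0 / θ x 1)) ^ 2 ∂μ 1) = 0 := by linarith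
      constructor
      · exact key0.1 (by linarith)
      · exact key1.1 (by linarith)
    · rintro ⟨h0, h1⟩
      rw [key0.2 h0, key1.2 h1]; ring
  · intro h1
    have e0 : (∫ x, g 0 x * (1 - Real.sqrt (θ x 1 / θ x 0)) ^ 2 ∂μ 0) = 0 :=
      key0.2 (Filter.Eventually.of_forall fun x => by rw [h1 x 0, h1 x 1])
    have e1 : (∫ x, g 1 x * (1 - Real.sqrt (θ x 0 / θ x 1)) ^ 2 ∂μ 1) = 0 :=
      key1.2 (Filter.Eventually.of_forall fun x => by rw [h1 x 0, h1 x 1])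
    rw [e0, e1]; ring
end

section
/- For the two-temperature rate functional with θ smooth and positive, I^ν(μ) = 0 for some ν > 0 implies μ = ϱ: indeed J₀(μ) = 0 forces ∇_x θ(x,β) = 0 for all x and both β (so θ(·,β) is constant in x), and J₁(μ) = 0 forces θ(x,β₁) = θ(x,β₂); together with ∫ θ dϱ = 1 this gives θ ≡ 1. -/
open MeasureTheory Real

set_option maxHeartbeats 1000000

private lemma mul4_zero {a b c e : ℝ} (h : a * b * c * e = 0) (ha : a ≠ 0) (hb : b ≠ 0)
    (he : e ≠ 0) : c = 0 := by
  rcases mul_eq_zero.mp h with h | h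
  · rcases mul_eq_zero.mp h with h | h
    · rcases mul_eq_zero.mp h with h | h
      · exact absurd h ha
      · exact absurd h hb
    · exact h
  · exact absurd h he

set_option maxHeartbeats 1000000 in


/-- for the two-temperature rate functional, `I^ν(μ) = J₀(μ) + νJ₁(μ) = 0`
for some `ν > 0` implies `μ = ϱ`, i.e. `θ = dμ/dϱ ≡ 1`.  Here `ϱ` has positive
(continuous) density `r x j` on `ℝ^d × {β₁,β₂}` (temperatures encoded by `Fin 2`),
`μ` has density `θ x j · r x j` with `θ` smooth and positive,
`J₀(μ) = Σ_β ∫ (1/(4θ²)) β⁻¹ |∇_xθ|² dμ` and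
`J₁(μ) = ½ Σ_β ∫ g_{ββ'} [1 − √(θ(x,β')/θ(x,β))]² dμ` with `g_{ββ'} > 0`. -/
theorem stmt18 (d : ℕ) (β : Fin 2 → ℝ) (hβ : ∀ j, 0 < β j)
    (r θ : EuclideanSpace ℝ (Fin d) → Fin 2 → ℝ)
    (g : Fin 2 → EuclideanSpace ℝ (Fin d) → ℝ)
    (hr : ∀ x j, 0 < r x j) (hrcont : ∀ j, Continuous fun x => r x j)
    (hrprob : (∫ x, r x 0) + (∫ x, r x 1) = 1)
    (hrint : ∀ j, Integrable fun x => r x j)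
    (hθ : ∀ x j, 0 < θ x j) (hθs : ∀ j, ContDiff ℝ (⊤ : ℕ∞) fun x => θ x j)
    (hg : ∀ j x, 0 < g j x)
    (hμprob : (∫ x, θ x 0 * r x 0) + (∫ x, θ x 1 * r x 1) = 1)
    (hμint : ∀ j, Integrable fun x => θ x j * r x j)
    (hJ₀int : ∀ j, Integrable fun x =>
      1 / (4 * θ x j ^ 2) * (β j)⁻¹ * ‖gradient (fun y => θ y j) x‖ ^ 2 * (θ x j * r x j))
    (hJ₁int₀ : Integrable fun x =>
      g 0 x * (1 - Real.sqrt (θ x 1 / θ x 0)) ^ 2 * (θ x 0 * r x 0))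
    (hJ₁int₁ : Integrable fun x =>
      g 1 x * (1 - Real.sqrt (θ x 0 / θ x 1)) ^ 2 * (θ x 1 * r x 1))
    (ν : ℝ) (hν : 0 < ν)
    (hzero :
      (∑ j, ∫ x, 1 / (4 * θ x j ^ 2) * (β j)⁻¹ *
          ‖gradient (fun y => θ y j) x‖ ^ 2 * (θ x j * r x j)) +
        ν * ((1 / 2) *
          ((∫ x, g 0 x * (1 - Real.sqrt (θ x 1 / θ x 0)) ^ 2 * (θ x 0 * r x 0)) +
            ∫ x, g 1 x * (1 - Real.sqrt (θ x 0 / θ x 1)) ^ 2 * (θ x 1 * r x 1))) = 0) :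
    ∀ x j, θ x j = 1 := by
  -- nonnegativity of all integrands
  have hF0 : ∀ j, (0 : EuclideanSpace ℝ (Fin d) → ℝ) ≤ fun x =>
      1 / (4 * θ x j ^ 2) * (β j)⁻¹ * ‖gradient (fun y => θ y j) x‖ ^ 2 * (θ x j * r x j) := by
    intro j x
    have h1 := hθ x j; have h2 := hβ j; have h3 := hr x j
    positivity
  have hFA : (0 : EuclideanSpace ℝ (Fin d) → ℝ) ≤ fun x =>
      g 0 x * (1 - Real.sqrt (θ x 1 / θ x 0)) ^ 2 * (θ x 0 * r x 0) := by
    intro x; have h1 := hθ x 0; have h2 := hg 0 x; have h3 := hr x 0; positivity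
  have hFB : (0 : EuclideanSpace ℝ (Fin d) → ℝ) ≤ fun x =>
      g 1 x * (1 - Real.sqrt (θ x 0 / θ x 1)) ^ 2 * (θ x 1 * r x 1) := by
    intro x; have h1 := hθ x 1; have h2 := hg 1 x; have h3 := hr x 1; positivity
  -- each integral is nonnegative
  have hI0 : ∀ j, 0 ≤ ∫ x, 1 / (4 * θ x j ^ 2) * (β j)⁻¹ *
      ‖gradient (fun y => θ y j) x‖ ^ 2 * (θ x j * r x j) :=
    fun j => integral_nonneg (hF0 j)
  have hIA : 0 ≤ ∫ x, g 0 x * (1 - Real.sqrt (θ x 1 / θ x 0)) ^ 2 * (θ x 0 * r x 0) :=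
    integral_nonneg hFA
  have hIB : 0 ≤ ∫ x, g 1 x * (1 - Real.sqrt (θ x 0 / θ x 1)) ^ 2 * (θ x 1 * r x 1) :=
    integral_nonneg hFB
  rw [Fin.sum_univ_two] at hzero
  have hAB : 0 ≤ ν * ((1 / 2) *
      ((∫ x, g 0 x * (1 - Real.sqrt (θ x 1 / θ x 0)) ^ 2 * (θ x 0 * r x 0)) +
        ∫ x, g 1 x * (1 - Real.sqrt (θ x 0 / θ x 1)) ^ 2 * (θ x 1 * r x 1))) := by
    apply mul_nonneg hν.le; nlinarith
  -- each integral is zero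
  have hI00 : (∫ x, 1 / (4 * θ x 0 ^ 2) * (β 0)⁻¹ *
      ‖gradient (fun y => θ y 0) x‖ ^ 2 * (θ x 0 * r x 0)) = 0 := by
    have := hI0 0; have := hI0 1; linarith
  have hI01 : (∫ x, 1 / (4 * θ x 1 ^ 2) * (β 1)⁻¹ *
      ‖gradient (fun y => θ y 1) x‖ ^ 2 * (θ x 1 * r x 1)) = 0 := by
    have := hI0 0; have := hI0 1; linarith
  have hI0z : ∀ j, (∫ x, 1 / (4 * θ x j ^ 2) * (β j)⁻¹ *
      ‖gradient (fun y => θ y j) x‖ ^ 2 * (θ x j * r x j)) = 0 := by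
    intro j; fin_cases j; exacts [hI00, hI01]
  have hsum : ν * ((1 / 2) *
      ((∫ x, g 0 x * (1 - Real.sqrt (θ x 1 / θ x 0)) ^ 2 * (θ x 0 * r x 0)) +
        ∫ x, g 1 x * (1 - Real.sqrt (θ x 0 / θ x 1)) ^ 2 * (θ x 1 * r x 1))) = 0 := by
    have := hI0 0; have := hI0 1; linarith
  have hABz : (∫ x, g 0 x * (1 - Real.sqrt (θ x 1 / θ x 0)) ^ 2 * (θ x 0 * r x 0)) = 0 ∧
      (∫ x, g 1 x * (1 - Real.sqrt (θ x 0 / θ x 1)) ^ 2 * (θ x 1 * r x 1)) = 0 := by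
    have h2 : ((1 / 2 : ℝ) *
        ((∫ x, g 0 x * (1 - Real.sqrt (θ x 1 / θ x 0)) ^ 2 * (θ x 0 * r x 0)) +
          ∫ x, g 1 x * (1 - Real.sqrt (θ x 0 / θ x 1)) ^ 2 * (θ x 1 * r x 1))) = 0 :=
      (mul_eq_zero.mp hsum).resolve_left hν.ne'
    constructor <;> linarith
  -- θ(·,j) is constant: gradient vanishes everywhere
  have hconst : ∀ j x y, θ x j = θ y j := by
    intro j
    have hae : (fun x => 1 / (4 * θ x j ^ 2) * (β j)⁻¹ *
        ‖gradient (fun y => θ y j) x‖ ^ 2 * (θ x j * r x j)) =ᵐ[volume] 0 :=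
      (integral_eq_zero_iff_of_nonneg (hF0 j) (hJ₀int j)).mp (hI0z j)
    have hgae : (fun x => gradient (fun y => θ y j) x) =ᵐ[volume] 0 := by
      filter_upwards [hae] with x hx
      have hc : ‖gradient (fun y => θ y j) x‖ ^ 2 = 0 := by
        refine mul4_zero hx ?_ ?_ ?_
        · have := hθ x j; positivity
        · exact (inv_pos.mpr (hβ j)).ne'
        · have := hθ x j; have := hr x j; positivity
      have := pow_eq_zero_iff (n := 2) (by norm_num) |>.mp hc
      simpa using norm_eq_zero.mp this
    have hgcont : Continuous fun x => gradient (fun y => θ y j) x := by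
      have h1 : Continuous fun x => fderiv ℝ (fun y => θ y j) x :=
        (hθs j).continuous_fderiv (by simp)
      exact ((InnerProductSpace.toDual ℝ
        (EuclideanSpace ℝ (Fin d))).symm.continuous).comp h1
    have hgzero : (fun x => gradient (fun y => θ y j) x) = 0 :=
      (Continuous.ae_eq_iff_eq volume hgcont continuous_const).mp hgae
    have hfd : ∀ x, fderiv ℝ (fun y => θ y j) x = 0 := by
      intro x
      have hx : gradient (fun y => θ y j) x = 0 := congrFun hgzero x
      have : (InnerProductSpace.toDual ℝ (EuclideanSpace ℝ (Fin d))).symm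
          (fderiv ℝ (fun y => θ y j) x) =
          (InnerProductSpace.toDual ℝ (EuclideanSpace ℝ (Fin d))).symm 0 := by
        simpa [gradient] using hx
      exact (InnerProductSpace.toDual ℝ (EuclideanSpace ℝ (Fin d))).symm.injective this
    intro x y
    exact is_const_of_fderiv_eq_zero ((hθs j).differentiable (by simp)) hfd x y
  -- from J₁ = 0 : θ(·,0) = θ(·,1) at some (hence every) point
  have heq : θ 0 0 = θ 0 1 := by
    have hae : (fun x => g 0 x * (1 - Real.sqrt (θ x 1 / θ x 0)) ^ 2 * (θ x 0 * r x 0))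
        =ᵐ[volume] 0 :=
      (integral_eq_zero_iff_of_nonneg hFA hJ₁int₀).mp hABz.1
    obtain ⟨x, hx⟩ := hae.exists
    have hsq : (1 - Real.sqrt (θ x 1 / θ x 0)) ^ 2 = 0 := by
      have hx' : g 0 x * (1 - Real.sqrt (θ x 1 / θ x 0)) ^ 2 * (θ x 0 * r x 0) = 0 := hx
      rcases mul_eq_zero.mp hx' with h | h
      · rcases mul_eq_zero.mp h with h | h
        · exact absurd h (hg 0 x).ne'
        · exact h
      · exact absurd h (by have := hθ x 0; have := hr x 0; positivity)
    have h1 : Real.sqrt (θ x 1 / θ x 0) = 1 := by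
      have := pow_eq_zero_iff (n := 2) (by norm_num) |>.mp hsq
      linarith
    have h2 : θ x 1 / θ x 0 = 1 := by
      have hd : (0 : ℝ) ≤ θ x 1 / θ x 0 := by
        have := hθ x 0; have := hθ x 1; positivity
      nlinarith [Real.sq_sqrt hd, h1]
    have h3 : θ x 1 = θ x 0 := by
      rwa [div_eq_one_iff_eq (hθ x 0).ne'] at h2
    calc θ 0 0 = θ x 0 := hconst 0 0 x
      _ = θ x 1 := h3.symm
      _ = θ 0 1 := hconst 1 x 0
  -- the common constant is 1
  set c := θ 0 0 with hc
  have hc0 : ∀ x, θ x 0 = c := fun x => hconst 0 x 0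
  have hc1 : ∀ x, θ x 1 = c := fun x => (hconst 1 x 0).trans heq.symm
  have hμ0 : (∫ x, θ x 0 * r x 0) = c * ∫ x, r x 0 := by
    rw [← integral_const_mul]
    exact integral_congr_ae (Filter.Eventually.of_forall fun x => show θ x 0 * r x 0 = c * r x 0 by rw [hc0 x])
  have hμ1 : (∫ x, θ x 1 * r x 1) = c * ∫ x, r x 1 := by
    rw [← integral_const_mul]
    exact integral_congr_ae (Filter.Eventually.of_forall fun x => show θ x 1 * r x 1 = c * r x 1 by rw [hc1 x])
  have hcone : c = 1 := by
    rw [hμ0, hμ1] at hμprob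
    nlinarith [hrprob]
  intro x j
  fin_cases j
  exacts [(hc0 x).trans hcone, (hc1 x).trans hcone]
end
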